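/- Let (X,T) be a topological dynamical system and let (x,y) ∈ X × X be a proximal pair. Suppose that the closed orbit of y (the closure of {T^n y : n ∈ ℤ}) is a minimal set for T, i.e., every point of it has dense orbit in it. Then (x,y) ∈ RP²ₛ. -/

import Mathlib

open Filter Topology

/-- The `n`-th iterate (`n : ℤ`) of a homeomorphism `T : X → X`. -/
def iterZ {X : Type*} [TopologicalSpace X] (T : X ≃ₜ X) (n : ℤ) : X → X :=
  fun x => (T.toEquiv ^ n) x

section Defs

variable {X : Type*} [TopologicalSpace X]

/-- The set of parallelograms `𝒫`: the closure in `X⁴` of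
`{(x, Tᵐx, Tⁿx, Tᵐ⁺ⁿx) : x ∈ X, m, n ∈ ℤ}`. -/
def Para (T : X ≃ₜ X) : Set (X × X × X × X) :=
  closure {q | ∃ (x : X) (m n : ℤ),
    q = (x, iterZ T m x, iterZ T n x, iterZ T (m + n) x)}

/-- The set of parallelepipeds `𝒬`: the closure in `X⁸ = X⁴ × X⁴` of
`{(x, Tᵐx, Tⁿx, Tᵐ⁺ⁿx, Tᵖx, Tᵐ⁺ᵖx, Tⁿ⁺ᵖx, Tᵐ⁺ⁿ⁺ᵖx) : x ∈ X, m, n, p ∈ ℤ}`. -/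
def Pip (T : X ≃ₜ X) : Set ((X × X × X × X) × (X × X × X × X)) :=
  closure {q | ∃ (x : X) (m n p : ℤ),
    q = ((x, iterZ T m x, iterZ T n x, iterZ T (m + n) x),
         (iterZ T p x, iterZ T (m + p) x, iterZ T (n + p) x, iterZ T (m + n + p) x))}

end Defs

section MetricDefs

variable {X : Type*} [MetricSpace X]

/-- `(X, T)` is transitive: some point has dense orbit `{Tⁿx : n ∈ ℤ}`. -/
def IsTransitive (T : X ≃ₜ X) : Prop :=
  ∃ x : X, Dense (Set.range fun n : ℤ => iterZ T n x)

/-- `(X, T)` is minimal: every point has dense orbit. -/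
def IsMinimal (T : X ≃ₜ X) : Prop :=
  ∀ x : X, Dense (Set.range fun n : ℤ => iterZ T n x)

/-- `(x, y)` is a proximal pair: `inf_{n ∈ ℤ} d(Tⁿx, Tⁿy) = 0`. -/
def ProximalPair (T : X ≃ₜ X) (x y : X) : Prop :=
  ⨅ n : ℤ, dist (iterZ T n x) (iterZ T n y) = 0

/-- `(X, T)` is distal: every pair of distinct points is distal,
i.e. `inf_{n ∈ ℤ} d(Tⁿx, Tⁿy) > 0`. -/
def IsDistal (T : X ≃ₜ X) : Prop :=
  ∀ x y : X, x ≠ y → 0 < ⨅ n : ℤ, dist (iterZ T n x) (iterZ T n y)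

/-- The regionally proximal relation `RP`. -/
def RP (T : X ≃ₜ X) (x y : X) : Prop :=
  ∀ ε > 0, ∃ x' y' : X, ∃ n : ℤ,
    dist x' x < ε ∧ dist y' y < ε ∧ dist (iterZ T n x') (iterZ T n y') < ε

/-- The doubly regionally proximal relation `RP²`. -/
def RP2 (T : X ≃ₜ X) (x y : X) : Prop :=
  ∀ ε > 0, ∃ x' y' : X, ∃ m n : ℤ,
    dist x' x < ε ∧ dist y' y < ε ∧
    dist (iterZ T m x') (iterZ T m y') < ε ∧
    dist (iterZ T n x') (iterZ T n y') < ε ∧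
    dist (iterZ T (m + n) x') (iterZ T (m + n) y') < ε

/-- The strongly doubly regionally proximal relation `RP²ₛ`. -/
def RP2S (T : X ≃ₜ X) (x y : X) : Prop :=
  ∀ ε > 0, ∃ x' y' : X, ∃ m n : ℤ,
    dist x' x < ε ∧ dist y' y < ε ∧
    dist (iterZ T m x') y < ε ∧ dist (iterZ T n x') y < ε ∧
    dist (iterZ T (m + n) x') y < ε ∧
    dist (iterZ T m y') y < ε ∧ dist (iterZ T n y') y < ε ∧
    dist (iterZ T (m + n) y') y < ε

end MetricDefs

section Aux

variable {X : Type*} [TopologicalSpace X]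

lemma iterZ_zero (T : X ≃ₜ X) (z : X) : iterZ T 0 z = z := by
  simp [iterZ]

lemma iterZ_add (T : X ≃ₜ X) (m n : ℤ) (z : X) :
    iterZ T (m + n) z = iterZ T m (iterZ T n z) := by
  simp [iterZ, zpow_add, Equiv.Perm.mul_apply]

lemma continuous_iterZ (T : X ≃ₜ X) (n : ℤ) : Continuous (iterZ T n) := by
  induction n using Int.induction_on with
  | zero => rw [show iterZ T 0 = id from funext (iterZ_zero T)]; exact continuous_id
  | succ k ih =>
      have h : iterZ T (k + 1) = fun z => iterZ T k (T z) := by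
        funext z
        simp [iterZ, zpow_add, Equiv.Perm.mul_apply]
      rw [h]
      exact ih.comp T.continuous
  | pred k ih =>
      have h : iterZ T (-k - 1) = fun z => iterZ T (-k) (T.symm z) := by
        funext z
        have : (-(k : ℤ) - 1) = (-k) + (-1) := by ring
        rw [this]
        simp [iterZ, zpow_add, Equiv.Perm.mul_apply]
      rw [h]
      exact ih.comp T.symm.continuous

end Aux

/-- Key lemma: a point proximal to a point `y` whose orbit closure is minimal
returns, together with `y`, arbitrarily close to `y` at a common time. -/
lemma key_return {X : Type*} [MetricSpace X] [CompactSpace X] [Nonempty X]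
    (T : X ≃ₜ X) (x y : X) (hprox : ProximalPair T x y)
    (hmin : ∀ z ∈ closure (Set.range fun n : ℤ => iterZ T n y),
      closure (Set.range fun n : ℤ => iterZ T n y) ⊆
        closure (Set.range fun n : ℤ => iterZ T n z)) :
    ∀ ε > 0, ∃ n : ℤ, dist (iterZ T n x) y < ε ∧ dist (iterZ T n y) y < ε := by
  intro ε hε
  -- choose times witnessing proximality
  have hsel : ∀ i : ℕ, ∃ n : ℤ,
      dist (iterZ T n x) (iterZ T n y) < 1 / (i + 1) := by
    intro i
    apply exists_lt_of_ciInf_lt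
    rw [hprox]
    positivity
  choose u hu using hsel
  -- subsequence converging for x
  obtain ⟨w, -, φ, hφ, hconvx⟩ :=
    IsCompact.tendsto_subseq (x := fun i : ℕ => iterZ T (u i) x)
      isCompact_univ (fun i => Set.mem_univ _)
  -- the y-sequence converges to the same limit
  have hdist0 : Tendsto (fun i => dist (iterZ T (u (φ i)) x) (iterZ T (u (φ i)) y))
      atTop (𝓝 0) := by
    have h1 : Tendsto (fun i : ℕ => 1 / ((i : ℝ) + 1)) atTop (𝓝 0) :=
      tendsto_one_div_add_atTop_nhds_zero_nat
    apply squeeze_zero (fun i => dist_nonneg) (fun i => ?_) h1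
    have hle : (i : ℝ) + 1 ≤ (φ i : ℝ) + 1 := by
      have h := hφ.id_le i
      have : (i : ℝ) ≤ (φ i : ℝ) := by exact_mod_cast h
      linarith
    calc dist (iterZ T (u (φ i)) x) (iterZ T (u (φ i)) y)
        ≤ 1 / ((φ i : ℝ) + 1) := (hu (φ i)).le
      _ ≤ 1 / ((i : ℝ) + 1) := by
          apply one_div_le_one_div_of_le (by positivity) hle
  have hconvy : Tendsto (fun i => iterZ T (u (φ i)) y) atTop (𝓝 w) :=
    tendsto_of_tendsto_of_dist hconvx hdist0
  -- w is in the orbit closure of y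
  have hw : w ∈ closure (Set.range fun n : ℤ => iterZ T n y) :=
    mem_closure_of_tendsto hconvy (Filter.Eventually.of_forall fun i => ⟨u (φ i), rfl⟩)
  -- y is in the orbit closure of w
  have hy : y ∈ closure (Set.range fun n : ℤ => iterZ T n w) := by
    apply hmin w hw
    exact subset_closure ⟨0, iterZ_zero T y⟩
  -- find j with T^j w close to y
  obtain ⟨b, ⟨j, rfl⟩, hb⟩ := Metric.mem_closure_iff.mp hy (ε / 2) (by positivity)
  -- push the sequences with T^j
  have hx2 : Tendsto (fun i => iterZ T j (iterZ T (u (φ i)) x)) atTop (𝓝 (iterZ T j w)) :=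
    ((continuous_iterZ T j).tendsto w).comp hconvx
  have hy2 : Tendsto (fun i => iterZ T j (iterZ T (u (φ i)) y)) atTop (𝓝 (iterZ T j w)) :=
    ((continuous_iterZ T j).tendsto w).comp hconvy
  have hx3 := (Metric.tendsto_atTop.mp hx2) (ε / 2) (by positivity)
  have hy3 := (Metric.tendsto_atTop.mp hy2) (ε / 2) (by positivity)
  obtain ⟨N1, hN1⟩ := hx3
  obtain ⟨N2, hN2⟩ := hy3
  refine ⟨j + u (φ (max N1 N2)), ?_, ?_⟩
  · rw [iterZ_add]
    calc dist (iterZ T j (iterZ T (u (φ (max N1 N2))) x)) y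
        ≤ dist (iterZ T j (iterZ T (u (φ (max N1 N2))) x)) (iterZ T j w)
          + dist (iterZ T j w) y := dist_triangle _ _ _
      _ < ε / 2 + ε / 2 := by
          have := hN1 (max N1 N2) (le_max_left _ _)
          have h2 : dist (iterZ T j w) y < ε / 2 := by rw [dist_comm]; exact hb
          exact add_lt_add this h2
      _ = ε := by ring
  · rw [iterZ_add]
    calc dist (iterZ T j (iterZ T (u (φ (max N1 N2))) y)) y
        ≤ dist (iterZ T j (iterZ T (u (φ (max N1 N2))) y)) (iterZ T j w)
          + dist (iterZ T j w) y := dist_triangle _ _ _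
      _ < ε / 2 + ε / 2 := by
          have := hN2 (max N1 N2) (le_max_right _ _)
          have h2 : dist (iterZ T j w) y < ε / 2 := by rw [dist_comm]; exact hb
          exact add_lt_add this h2
      _ = ε := by ring

/-- A proximal pair `(x, y)` with `y` having minimal closed orbit is strongly doubly
regionally proximal. -/
theorem stmt7 {X : Type*} [MetricSpace X] [CompactSpace X] [Nonempty X]
    (T : X ≃ₜ X) (x y : X) (hprox : ProximalPair T x y)
    (hmin : ∀ z ∈ closure (Set.range fun n : ℤ => iterZ T n y),
      closure (Set.range fun n : ℤ => iterZ T n y) ⊆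
        closure (Set.range fun n : ℤ => iterZ T n z)) :
    RP2S T x y := by
  intro ε hε
  obtain ⟨m, hm1, hm2⟩ := key_return T x y hprox hmin (ε / 2) (by positivity)
  -- continuity of T^m at y
  obtain ⟨δ, hδ, hδc⟩ := Metric.continuous_iff.mp (continuous_iterZ T m) y (ε / 2)
    (by positivity)
  obtain ⟨n, hn1, hn2⟩ := key_return T x y hprox hmin (min ε δ)
    (lt_min hε hδ)
  refine ⟨x, y, m, n, by simpa using hε, by simpa using hε, ?_, ?_, ?_, ?_, ?_, ?_⟩
  · linarith
  · exact hn1.trans_le (min_le_left _ _)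
  · rw [iterZ_add]
    calc dist (iterZ T m (iterZ T n x)) y
        ≤ dist (iterZ T m (iterZ T n x)) (iterZ T m y) + dist (iterZ T m y) y :=
          dist_triangle _ _ _
      _ < ε / 2 + ε / 2 := by
          have h1 := hδc _ (hn1.trans_le (min_le_right _ _))
          exact add_lt_add h1 hm2
      _ = ε := by ring
  · linarith
  · exact hn2.trans_le (min_le_left _ _)
  · rw [iterZ_add]
    calc dist (iterZ T m (iterZ T n y)) y
        ≤ dist (iterZ T m (iterZ T n y)) (iterZ T m y) + dist (iterZ T m y) y :=
          dist_triangle _ _ _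
      _ < ε / 2 + ε / 2 := by
          have h1 := hδc _ (hn2.trans_le (min_le_right _ _))
          exact add_lt_add h1 hm2
      _ = ε := by ring
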